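/- Let n ≥ 2 be an integer, λ = (λ_1 ≥ λ_2 ≥ … ≥ λ_n ≥ 0) a partition, and q, t ∈ ℂ with 0 < |q| < 1 and t ≠ 0 such that b_j q^k ≠ 1 for all j = 1,…,n−1 and all integers k ≥ 0. Define d_n^r(λ) = e_r(q^{λ_1} t^{n−1}, q^{λ_2} t^{n−2}, …, q^{λ_n} t^0), the r-th elementary symmetric polynomial of the n numbers q^{λ_i} t^{n−i} (equivalently, ∏_{i=1}^n (1 + X q^{λ_i} t^{n−i}) = Σ_{r=0}^n X^r d_n^r(λ)). Then for every z ∈ ℂ with |z| < 1, the function φ_λ satisfies the separated difference equation Σ_{i=0}^n (1 − z (q t^{−1})^i) · d_n^{n−i}(λ) · (−1)^i · φ_λ(q,t; q^i z) = 0. -/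

import Mathlib

/-!
STATEMENT 1: With `n = m + 2 ≥ 2`, a partition `λ`, `0 < |q| < 1`, `t ≠ 0`, and
`bⱼ qᵏ ≠ 1` for all `j, k ≥ 0`, and with `d_n^r(λ)` the `r`-th elementary symmetric
polynomial of the numbers `q^{λ_i} t^{n-i}`, the function `φ_λ` satisfies the separated
difference equation `Σ_{i=0}^n (1 - z (q t⁻¹)^i) d_n^{n-i}(λ) (-1)^i φ_λ(q,t;q^i z) = 0`
for all `|z| < 1`.
-/

/-- `(a;q)_m = ∏_{k=0}^{m-1} (1 - a q^k)` for `m : ℕ`. -/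
noncomputable def qPochN (a q : ℂ) (m : ℕ) : ℂ := ∏ k ∈ Finset.range m, (1 - a * q ^ k)

/-- The basic hypergeometric series `_{r+1}φ_r(a₁,…,a_{r+1}; b₁,…,b_r; q, z)`. -/
noncomputable def bhs {r : ℕ} (a : Fin (r + 1) → ℂ) (b : Fin r → ℂ) (q z : ℂ) : ℂ :=
  ∑' m : ℕ, (∏ i, qPochN (a i) q m) / (qPochN q q m * ∏ j, qPochN (b j) q m) * z ^ m

/-- `a_i = q^{1+λ_n-λ_i} t^{i-1-n}`, for `i = 1,…,n` (zero-based index: `i : Fin n`,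
`n = m + 2`). -/
noncomputable def aPar (m : ℕ) (lam : Fin (m + 2) → ℕ) (q t : ℂ) (i : Fin (m + 2)) : ℂ :=
  q ^ (1 + (lam (Fin.last (m + 1)) : ℤ) - (lam i : ℤ)) * t ^ ((i : ℤ) - (m + 2 : ℤ))

/-- `b_j = t a_j`, for `j = 1,…,n-1`. -/
noncomputable def bPar (m : ℕ) (lam : Fin (m + 2) → ℕ) (q t : ℂ) (j : Fin (m + 1)) : ℂ :=
  t * aPar m lam q t j.castSucc

/-- `φ_λ(q,t;z) = z^{λ_n} · _nφ_{n-1}(a; b; q, z)`. -/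
noncomputable def phiLam (m : ℕ) (lam : Fin (m + 2) → ℕ) (q t z : ℂ) : ℂ :=
  z ^ (lam (Fin.last (m + 1))) * bhs (aPar m lam q t) (bPar m lam q t) q z

/-- `d_n^r(λ) = e_r(q^{λ_1} t^{n-1}, …, q^{λ_n} t^0)`, the `r`-th elementary symmetric
polynomial of the `n` numbers `q^{λ_i} t^{n-i}` (`n = m + 2`, zero-based indexing). -/
noncomputable def dCoef (m : ℕ) (lam : Fin (m + 2) → ℕ) (q t : ℂ) (r : ℕ) : ℂ :=
  ∑ S ∈ Finset.powersetCard r (Finset.univ : Finset (Fin (m + 2))),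
    ∏ i ∈ S, q ^ (lam i) * t ^ (m + 1 - (i : ℕ))

open Finset Filter Topology


noncomputable def uVal (m : ℕ) (lam : Fin (m + 2) → ℕ) (q t : ℂ) (i : Fin (m + 2)) : ℂ :=
  q ^ (lam i) * t ^ (m + 1 - (i : ℕ))

noncomputable def Kc (m : ℕ) (lam : Fin (m + 2) → ℕ) (q t : ℂ) (i : Fin (m + 2)) : ℂ :=
  t ^ ((i : ℤ) - (m + 1 : ℤ)) * q ^ (-(lam i : ℤ))

noncomputable def Ef (q t : ℂ) (a b : ℤ) : ℂ := q ^ a * t ^ b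

theorem Ef_mul {q t : ℂ} (hq : q ≠ 0) (ht : t ≠ 0) (a b c d : ℤ) :
    Ef q t a b * Ef q t c d = Ef q t (a + c) (b + d) := by
  rw [Ef, Ef, Ef, zpow_add₀ hq, zpow_add₀ ht]; ring

theorem Ef_one (q t : ℂ) : Ef q t 0 0 = 1 := by simp [Ef]
theorem Ef_pow (q t : ℂ) (M : ℕ) : (q : ℂ) ^ M = Ef q t (M : ℤ) 0 := by simp [Ef]
theorem Ef_inv_t (q t : ℂ) : t⁻¹ = Ef q t 0 (-1) := by simp [Ef]

section Lemmas
variable {m : ℕ} (lam : Fin (m + 2) → ℕ) {q t : ℂ}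

theorem aPar_eq (i : Fin (m + 2)) :
    aPar m lam q t i = Ef q t (1 + (lam (Fin.last (m + 1)) : ℤ) - (lam i : ℤ)) ((i : ℤ) - (m + 2 : ℤ)) := rfl

theorem bPar_eq (ht : t ≠ 0) (j : Fin (m + 1)) :
    bPar m lam q t j =
      Ef q t (1 + (lam (Fin.last (m + 1)) : ℤ) - (lam j.castSucc : ℤ)) ((j : ℤ) + 1 - (m + 2 : ℤ)) := by
  rw [bPar, aPar_eq, Ef, Ef,
    show ((j : ℤ) + 1 - (m + 2 : ℤ)) = ((j.castSucc : ℤ) - (m + 2 : ℤ)) + 1 by simp; ring,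
    zpow_add₀ ht, zpow_one]
  ring

theorem Kc_eq (i : Fin (m + 2)) :
    Kc m lam q t i = Ef q t (-(lam i : ℤ)) ((i : ℤ) - (m + 1 : ℤ)) := by
  rw [Kc, Ef]; ring

theorem uVal_eq (i : Fin (m + 2)) :
    uVal m lam q t i = Ef q t (lam i : ℤ) ((m + 1 : ℤ) - (i : ℕ)) := by
  rw [uVal, Ef, ← zpow_natCast q (lam i), ← zpow_natCast t (m + 1 - (i : ℕ))]
  congr 2
  have := Fin.is_le i
  omega

theorem lemA (hq : q ≠ 0) (ht : t ≠ 0) (i : Fin (m + 2)) (M : ℕ) :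
    1 - aPar m lam q t i * q ^ M =
      Kc m lam q t i *
        (uVal m lam q t i - q ^ (lam (Fin.last (m + 1)) + M + 1) * t⁻¹) := by
  rw [aPar_eq, Kc_eq, uVal_eq, Ef_pow q t M,
    Ef_pow q t (lam (Fin.last (m + 1)) + M + 1), Ef_inv_t q t,
    Ef_mul hq ht, mul_sub, Ef_mul hq ht, Ef_mul hq ht, Ef_mul hq ht, ← Ef_one q t]
  congr 2 <;> push_cast <;> omega

theorem lemB (hq : q ≠ 0) (ht : t ≠ 0) (j : Fin (m + 1)) (M : ℕ) :
    1 - bPar m lam q t j * q ^ M =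
      Kc m lam q t j.castSucc *
        (uVal m lam q t j.castSucc - q ^ (lam (Fin.last (m + 1)) + M + 1)) := by
  rw [bPar_eq lam ht, Kc_eq, uVal_eq, Ef_pow q t M,
    Ef_pow q t (lam (Fin.last (m + 1)) + M + 1),
    Ef_mul hq ht, mul_sub, Ef_mul hq ht, Ef_mul hq ht, ← Ef_one q t]
  congr 2 <;> push_cast [Fin.coe_castSucc] <;> omega

theorem lemQ (hq : q ≠ 0) (ht : t ≠ 0) (M : ℕ) :
    1 - q * q ^ M =
      Kc m lam q t (Fin.last (m + 1)) *
        (uVal m lam q t (Fin.last (m + 1)) - q ^ (lam (Fin.last (m + 1)) + M + 1)) := by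
  have hqq : (q : ℂ) = Ef q t 1 0 := by simp [Ef]
  rw [Kc_eq, uVal_eq, Ef_pow q t M, Ef_pow q t (lam (Fin.last (m + 1)) + M + 1)]
  nth_rewrite 1 [hqq]
  rw [Ef_mul hq ht, mul_sub, Ef_mul hq ht, Ef_mul hq ht, ← Ef_one q t]
  congr 2 <;> push_cast [Fin.val_last] <;> omega

end Lemmas

noncomputable def Pfun (m : ℕ) (lam : Fin (m + 2) → ℕ) (q t x : ℂ) : ℂ :=
  ∏ i, (uVal m lam q t i - x)

noncomputable def cC (m : ℕ) (lam : Fin (m + 2) → ℕ) (q t : ℂ) (M : ℕ) : ℂ :=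
  (∏ i, qPochN (aPar m lam q t i) q M) /
    (qPochN q q M * ∏ j, qPochN (bPar m lam q t j) q M)

section Prod
variable {m : ℕ} (lam : Fin (m + 2) → ℕ) {q t : ℂ}

theorem prodN (hq : q ≠ 0) (ht : t ≠ 0) (M : ℕ) :
    ∏ i, (1 - aPar m lam q t i * q ^ M) =
      (∏ i, Kc m lam q t i) *
        Pfun m lam q t (q ^ (lam (Fin.last (m + 1)) + M + 1) * t⁻¹) := by
  rw [Pfun, ← Finset.prod_mul_distrib]
  exact Finset.prod_congr rfl fun i _ => lemA lam hq ht i M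

theorem prodD (hq : q ≠ 0) (ht : t ≠ 0) (M : ℕ) :
    (1 - q * q ^ M) * ∏ j, (1 - bPar m lam q t j * q ^ M) =
      (∏ i, Kc m lam q t i) *
        Pfun m lam q t (q ^ (lam (Fin.last (m + 1)) + M + 1)) := by
  rw [Pfun, Fin.prod_univ_castSucc (f := fun i => Kc m lam q t i),
    Fin.prod_univ_castSucc (f := fun i => uVal m lam q t i - q ^ (lam (Fin.last (m + 1)) + M + 1)),
    lemQ lam hq ht M]
  rw [Finset.prod_congr rfl fun j _ => lemB lam hq ht j M, Finset.prod_mul_distrib]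
  ring

theorem qPochN_succ (a q : ℂ) (M : ℕ) :
    qPochN a q (M + 1) = qPochN a q M * (1 - a * q ^ M) := Finset.prod_range_succ _ M

theorem cC_succ (M : ℕ) :
    cC m lam q t (M + 1) =
      cC m lam q t M *
        ((∏ i, (1 - aPar m lam q t i * q ^ M)) /
          ((1 - q * q ^ M) * ∏ j, (1 - bPar m lam q t j * q ^ M))) := by
  rw [cC, cC, div_mul_div_comm]
  congr 1
  · rw [← Finset.prod_mul_distrib]
    exact Finset.prod_congr rfl fun i _ => qPochN_succ _ _ M
  · rw [qPochN_succ,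
      Finset.prod_congr rfl fun j (_ : j ∈ Finset.univ) => qPochN_succ (bPar m lam q t j) q M,
      Finset.prod_mul_distrib]
    ring

theorem lemma3 (hq : q ≠ 0) (ht : t ≠ 0)
    (hq1 : ∀ k : ℕ, q * q ^ k ≠ 1) (hb : ∀ j : Fin (m + 1), ∀ k : ℕ, bPar m lam q t j * q ^ k ≠ 1)
    (M : ℕ) :
    cC m lam q t (M + 1) * Pfun m lam q t (q ^ (lam (Fin.last (m + 1)) + M + 1)) =
      cC m lam q t M * Pfun m lam q t (q ^ (lam (Fin.last (m + 1)) + M + 1) * t⁻¹) := by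
  have hdne : (1 - q * q ^ M) * ∏ j, (1 - bPar m lam q t j * q ^ M) ≠ 0 :=
    mul_ne_zero (sub_ne_zero.2 fun h => hq1 M h.symm)
      (Finset.prod_ne_zero_iff.2 fun j _ => sub_ne_zero.2 fun h => hb j M h.symm)
  have h2 := prodD lam hq ht M
  have hKP : (∏ i, Kc m lam q t i) * Pfun m lam q t (q ^ (lam (Fin.last (m + 1)) + M + 1)) ≠ 0 :=
    h2 ▸ hdne
  obtain ⟨hK, hP⟩ := mul_ne_zero_iff.1 hKP
  rw [cC_succ, prodN lam hq ht M, h2, mul_assoc]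
  congr 1
  field_simp

theorem Pfun_zero_at : Pfun m lam q t (q ^ (lam (Fin.last (m + 1)))) = 0 := by
  apply Finset.prod_eq_zero (Finset.mem_univ (Fin.last (m + 1)))
  simp [uVal, Fin.val_last]

end Prod



section L1
variable {m : ℕ} (lam : Fin (m + 2) → ℕ) (q t : ℂ)

theorem lem1 (x : ℂ) :
    Pfun m lam q t x =
      ∑ i ∈ Finset.range (m + 3), dCoef m lam q t (m + 2 - i) * (-1 : ℂ) ^ i * x ^ i := by
  have step1 : Pfun m lam q t x =
      ∑ r ∈ Finset.range (m + 3), dCoef m lam q t r * (-x) ^ (m + 2 - r) := by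
    rw [Pfun]
    simp_rw [sub_eq_add_neg]
    rw [Finset.prod_add]
    rw [Finset.sum_powerset]
    rw [show (#(Finset.univ : Finset (Fin (m + 2))) + 1) = m + 3 by simp]
    refine Finset.sum_congr rfl fun r hr => ?_
    rw [dCoef, Finset.sum_mul]
    refine Finset.sum_congr rfl fun T hT => ?_
    obtain ⟨hTsub, hTcard⟩ := Finset.mem_powersetCard.1 hT
    rw [Finset.prod_const, Finset.card_sdiff_of_subset hTsub, hTcard, Finset.card_univ, Fintype.card_fin]
    rfl
  rw [step1, ← Finset.sum_range_reflect]
  refine Finset.sum_congr rfl fun i hi => ?_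
  have hi' : i ≤ m + 2 := by simpa [Nat.lt_succ_iff] using Finset.mem_range.1 hi
  rw [show m + 3 - 1 - i = m + 2 - i from by omega, show m + 2 - (m + 2 - i) = i from by omega,
    neg_pow]
  ring

end L1

section Summ
variable {m : ℕ} (lam : Fin (m + 2) → ℕ) {q t : ℂ}

theorem cC_summable (hq : q ≠ 0) (ht : t ≠ 0) (hq1 : ‖q‖ < 1)
    (hqk : ∀ k : ℕ, q * q ^ k ≠ 1)
    (hb : ∀ j : Fin (m + 1), ∀ k : ℕ, bPar m lam q t j * q ^ k ≠ 1)
    (w : ℂ) (hw : ‖w‖ < 1) :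
    Summable (fun M => cC m lam q t M * w ^ M) := by
  by_cases hterm : (∃ i : Fin (m + 2), ∃ k : ℕ, 1 - aPar m lam q t i * q ^ k = 0) ∨ w = 0
  · -- eventually zero
    obtain ⟨i, k, hik⟩ | hw0 := hterm
    · apply summable_of_ne_finset_zero (s := Finset.range (k + 1))
      intro M hM
      have hkM : k < M := by simpa [Nat.lt_succ_iff] using hM
      have : qPochN (aPar m lam q t i) q M = 0 :=
        Finset.prod_eq_zero (Finset.mem_range.2 hkM) hik
      have hN : (∏ i', qPochN (aPar m lam q t i') q M) = 0 :=
        Finset.prod_eq_zero (Finset.mem_univ i) this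
      rw [cC, hN, zero_div, zero_mul]
    · apply summable_of_ne_finset_zero (s := Finset.range 1)
      intro M hM
      have : M ≠ 0 := by simpa using hM
      rw [hw0, zero_pow this, mul_zero]
  · push_neg at hterm
    obtain ⟨ha, hw0⟩ := hterm
    have hDne : ∀ M, qPochN q q M * ∏ j, qPochN (bPar m lam q t j) q M ≠ 0 := by
      intro M
      refine mul_ne_zero ?_ (Finset.prod_ne_zero_iff.2 fun j _ => ?_)
      · exact Finset.prod_ne_zero_iff.2 fun k _ => sub_ne_zero.2 fun h => hqk k h.symm
      · exact Finset.prod_ne_zero_iff.2 fun k _ => sub_ne_zero.2 fun h => hb j k h.symm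
    have hfne : ∀ M, cC m lam q t M * w ^ M ≠ 0 := by
      intro M
      refine mul_ne_zero (div_ne_zero ?_ (hDne M)) (pow_ne_zero _ hw0)
      exact Finset.prod_ne_zero_iff.2 fun i _ =>
        Finset.prod_ne_zero_iff.2 fun k _ => ha i k
    have hdne : ∀ M, (1 - q * q ^ M) * ∏ j, (1 - bPar m lam q t j * q ^ M) ≠ 0 := fun M =>
      mul_ne_zero (sub_ne_zero.2 fun h => hqk M h.symm)
        (Finset.prod_ne_zero_iff.2 fun j _ => sub_ne_zero.2 fun h => hb j M h.symm)
    set g : ℕ → ℂ := fun M =>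
      (∏ i, (1 - aPar m lam q t i * q ^ M)) /
        ((1 - q * q ^ M) * ∏ j, (1 - bPar m lam q t j * q ^ M)) with hg
    have hfsucc : ∀ M, cC m lam q t (M + 1) * w ^ (M + 1) =
        (cC m lam q t M * w ^ M) * (w * g M) := by
      intro M
      rw [cC_succ]
      simp only [hg]
      ring
    have hgt : Tendsto g atTop (𝓝 1) := by
      have hpow : Tendsto (fun M : ℕ => q ^ M) atTop (𝓝 0) :=
        tendsto_pow_atTop_nhds_zero_of_norm_lt_one hq1
      have hfac : ∀ a : ℂ, Tendsto (fun M : ℕ => 1 - a * q ^ M) atTop (𝓝 1) := by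
        intro a
        have := (hpow.const_mul a).const_sub 1
        simpa using this
      have hnum : Tendsto (fun M => ∏ i, (1 - aPar m lam q t i * q ^ M)) atTop (𝓝 1) := by
        have := tendsto_finset_prod (f := fun (i : Fin (m + 2)) (M : ℕ) =>
          1 - aPar m lam q t i * q ^ M) (x := atTop) (a := fun _ => 1)
          Finset.univ (fun i _ => hfac _)
        simpa using this
      have hden : Tendsto (fun M => (1 - q * q ^ M) * ∏ j, (1 - bPar m lam q t j * q ^ M))
          atTop (𝓝 1) := by
        have h2 := tendsto_finset_prod (f := fun (j : Fin (m + 1)) (M : ℕ) =>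
          1 - bPar m lam q t j * q ^ M) (x := atTop) (a := fun _ => 1)
          Finset.univ (fun j _ => hfac _)
        have := (hfac q).mul h2
        simpa using this
      have := hnum.div hden one_ne_zero
      rw [div_one] at this
      exact this
    refine summable_of_ratio_test_tendsto_lt_one hw (Filter.Eventually.of_forall hfne) ?_
    have hratio : ∀ M, ‖cC m lam q t (M + 1) * w ^ (M + 1)‖ / ‖cC m lam q t M * w ^ M‖ =
        ‖w * g M‖ := by
      intro M
      rw [hfsucc M, norm_mul, mul_comm, mul_div_assoc, div_self (norm_ne_zero_iff.2 (hfne M)), mul_one]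
    have hlim : Tendsto (fun M => ‖w * g M‖) atTop (𝓝 ‖w‖) := by
      have := (tendsto_const_nhds (x := w) (f := atTop (α := ℕ))).mul hgt
      have := this.norm
      simpa using this
    exact Filter.Tendsto.congr (fun M => (hratio M).symm) hlim

end Summ





theorem phiLam_eq (m : ℕ) (lam : Fin (m + 2) → ℕ) (q t w : ℂ) :
    phiLam m lam q t w = w ^ (lam (Fin.last (m + 1))) * ∑' M : ℕ, cC m lam q t M * w ^ M := rfl


theorem stmt1 (m : ℕ) (lam : Fin (m + 2) → ℕ) (hlam : Antitone lam)
    (q t : ℂ) (hq0 : 0 < ‖q‖) (hq1 : ‖q‖ < 1) (ht : t ≠ 0)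
    (hb : ∀ j : Fin (m + 1), ∀ k : ℕ, bPar m lam q t j * q ^ k ≠ 1) :
    ∀ z : ℂ, ‖z‖ < 1 →
      ∑ i ∈ Finset.range (m + 3),
        (1 - z * (q * t⁻¹) ^ i) * dCoef m lam q t (m + 2 - i) * (-1 : ℂ) ^ i *
          phiLam m lam q t (q ^ i * z) = 0 := by
  intro z hz
  set L := lam (Fin.last (m + 1)) with hL
  have hq : q ≠ 0 := by
    intro h; rw [h] at hq0; simp at hq0
  have hqn : ‖q‖ < 1 := hq1
  have hzn : ‖z‖ < 1 := hz
  have hqk : ∀ k : ℕ, q * q ^ k ≠ 1 := by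
    intro k h
    have : ‖q * q ^ k‖ < 1 := by
      rw [norm_mul, norm_pow]
      calc ‖q‖ * ‖q‖ ^ k ≤ ‖q‖ * 1 := by
            refine mul_le_mul_of_nonneg_left ?_ (norm_nonneg q)
            exact pow_le_one₀ (norm_nonneg q) hqn.le
        _ < 1 := by simpa using hqn
    rw [h] at this; simp at this
  have hsum : ∀ w : ℂ, ‖w‖ < 1 → Summable (fun M => cC m lam q t M * w ^ M) :=
    fun w hw => cC_summable lam hq ht hqn hqk hb w hw
  have hwlt : ∀ i : ℕ, ‖q ^ i * z‖ < 1 := by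
    intro i
    rw [norm_mul, norm_pow]
    calc ‖q‖ ^ i * ‖z‖ ≤ 1 * ‖z‖ := by
          refine mul_le_mul_of_nonneg_right ?_ (norm_nonneg z)
          exact pow_le_one₀ (norm_nonneg q) hqn.le
      _ < 1 := by simpa using hzn
  set C : ℕ → ℂ := fun i => (1 - z * (q * t⁻¹) ^ i) * dCoef m lam q t (m + 2 - i) * (-1 : ℂ) ^ i
    with hC
  set g : ℕ → ℕ → ℂ := fun i M => C i * ((q ^ i * z) ^ L * (cC m lam q t M * (q ^ i * z) ^ M))
    with hg
  have hgsum : ∀ i ∈ Finset.range (m + 3), Summable (g i) := fun i _ =>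
    ((hsum (q ^ i * z) (hwlt i)).mul_left _).mul_left _
  have hterm : ∀ i ∈ Finset.range (m + 3),
      (1 - z * (q * t⁻¹) ^ i) * dCoef m lam q t (m + 2 - i) * (-1 : ℂ) ^ i *
        phiLam m lam q t (q ^ i * z) = ∑' M, g i M := by
    intro i _
    rw [phiLam_eq, ← hL, ← tsum_mul_left, ← tsum_mul_left]
  rw [Finset.sum_congr rfl hterm, ← Summable.tsum_finsetSum hgsum]
  set A : ℕ → ℂ := fun M => (cC m lam q t M * z ^ M) * (z ^ L * Pfun m lam q t (q ^ L * q ^ M))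
    with hA
  have hA0 : A 0 = 0 := by
    simp only [hA, pow_zero, mul_one]
    rw [Pfun_zero_at]
    ring
  have hkey : ∀ M, ∑ i ∈ Finset.range (m + 3), g i M = A M - A (M + 1) := by
    intro M
    have e1 : ∀ i, g i M = cC m lam q t M * z ^ (L + M) *
        (dCoef m lam q t (m + 2 - i) * (-1 : ℂ) ^ i * (q ^ (L + M)) ^ i) -
        z * (cC m lam q t M * z ^ (L + M) *
          (dCoef m lam q t (m + 2 - i) * (-1 : ℂ) ^ i * (q * t⁻¹ * q ^ (L + M)) ^ i)) := by
      intro i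
      simp only [hg, hC]
      ring
    rw [Finset.sum_congr rfl fun i _ => e1 i, Finset.sum_sub_distrib, ← Finset.mul_sum,
      ← Finset.mul_sum, ← Finset.mul_sum, ← lem1, ← lem1]
    have e2 : q * t⁻¹ * q ^ (L + M) = q ^ (L + M + 1) * t⁻¹ := by
      rw [pow_succ]; ring
    have e3 : A M = cC m lam q t M * z ^ (L + M) * Pfun m lam q t (q ^ (L + M)) := by
      simp only [hA, ← pow_add]
      ring
    have e4 : A (M + 1) = z * (cC m lam q t M * z ^ (L + M) *
        Pfun m lam q t (q ^ (L + M + 1) * t⁻¹)) := by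
      simp only [hA, ← pow_add]
      have := lemma3 lam hq ht hqk hb M
      rw [← hL] at this
      rw [show L + (M + 1) = L + M + 1 from rfl]
      calc cC m lam q t (M + 1) * z ^ (M + 1) * (z ^ L * Pfun m lam q t (q ^ (L + M + 1)))
          = (cC m lam q t (M + 1) * Pfun m lam q t (q ^ (L + M + 1))) * (z ^ (M + 1) * z ^ L) := by
            ring
        _ = (cC m lam q t M * Pfun m lam q t (q ^ (L + M + 1) * t⁻¹)) * (z ^ (M + 1) * z ^ L) := by
            rw [this]
        _ = _ := by ring
    rw [e2, e3, e4]
  rw [tsum_congr hkey]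
  have hsummh : Summable (fun M => A M - A (M + 1)) := by
    have := summable_sum hgsum
    exact this.congr hkey
  have htel : Tendsto (fun N => ∑ M ∈ Finset.range N, (A M - A (M + 1))) atTop (𝓝 (A 0)) := by
    have h1 : ∀ N, ∑ M ∈ Finset.range N, (A M - A (M + 1)) = A 0 - A N := fun N =>
      Finset.sum_range_sub' A N
    have hAt : Tendsto A atTop (𝓝 0) := by
      have h2 : Tendsto (fun M => cC m lam q t M * z ^ M) atTop (𝓝 0) :=
        (hsum z hzn).tendsto_atTop_zero
      have hPfun : Continuous (Pfun m lam q t) := by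
        unfold Pfun
        exact continuous_finset_prod _ fun i _ => continuous_const.sub continuous_id
      have hPc : Continuous fun x : ℂ => z ^ L * Pfun m lam q t (q ^ L * x) :=
        continuous_const.mul (hPfun.comp (continuous_const.mul continuous_id))
      have h3 : Tendsto (fun M : ℕ => z ^ L * Pfun m lam q t (q ^ L * q ^ M)) atTop
          (𝓝 (z ^ L * Pfun m lam q t (q ^ L * 0))) :=
        (hPc.tendsto 0).comp (tendsto_pow_atTop_nhds_zero_of_norm_lt_one hqn)
      have := h2.mul h3
      simpa using this
    have := (tendsto_const_nhds (x := A 0) (f := atTop (α := ℕ))).sub hAt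
    rw [sub_zero] at this
    exact this.congr fun N => (h1 N).symm
  have := hsummh.hasSum.tendsto_sum_nat
  have h0 := tendsto_nhds_unique this htel
  rw [h0, hA0]
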